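/- Anytime guarantee for acting greedily with respect to a monotone upper bound: in an SSP MDP, let V̄ satisfy V* ≤ V̄, T V̄ ≤ V̄, and V̄(s_g) = 0, and let π be the greedy policy π(s) = argmin_a ∑_{s'} T(s,a,s')(C(s,a,s') + V̄(s')). Then the expected cost V^π of π satisfies V^π(s) ≤ V̄(s) for all states s; in particular π is proper from every state where V̄(s) < ∞ (assuming all costs are positive). -/

import Mathlib

open Filter

noncomputable def hitProb {σ : Type*} [Fintype σ] (P : σ → σ → ℝ) (G : σ → Prop)
    [DecidablePred G] : ℕ → σ → ℝ
  | 0, s => if G s then 1 else 0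
  | n + 1, s => if G s then 1 else ∑ s' : σ, P s s' * hitProb P G n s'

def ProperFrom {σ : Type*} [Fintype σ] (P : σ → σ → ℝ) (G : σ → Prop)
    [DecidablePred G] (s : σ) : Prop :=
  Tendsto (fun n => hitProb P G n s) atTop (nhds 1)

/-- The cost-minimizing Bellman operator. -/
noncomputable def bellman {S A : Type*} [Fintype S] [Fintype A] [Nonempty A]
    (T : S → A → S → ℝ) (C : S → A → S → ℝ) (V : S → ℝ) (s : S) : ℝ :=
  Finset.univ.inf' Finset.univ_nonempty
    (fun a => ∑ s' : S, T s a s' * (C s a s' + V s'))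

/-- Expected cost of policy `π` over the first `n` steps (stopping at the goal `sg`). -/
noncomputable def expCost {S A : Type*} [Fintype S] [DecidableEq S]
    (T : S → A → S → ℝ) (C : S → A → S → ℝ) (sg : S) (π : S → A) : ℕ → S → ℝ
  | 0, _ => 0
  | n + 1, s => if s = sg then 0 else
      ∑ s' : S, T s (π s) s' * (C s (π s) s' + expCost T C sg π n s')

lemma hitProb_nonneg {σ : Type*} [Fintype σ] (P : σ → σ → ℝ) (G : σ → Prop)
    [DecidablePred G] (hP0 : ∀ s s', 0 ≤ P s s') :
    ∀ n s, 0 ≤ hitProb P G n s := by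
  intro n
  induction n with
  | zero => intro s; simp only [hitProb]; split <;> norm_num
  | succ n ih =>
    intro s; simp only [hitProb]; split
    · norm_num
    · exact Finset.sum_nonneg fun s' _ => mul_nonneg (hP0 _ _) (ih s')

lemma hitProb_le_one {σ : Type*} [Fintype σ] (P : σ → σ → ℝ) (G : σ → Prop)
    [DecidablePred G] (hP0 : ∀ s s', 0 ≤ P s s') (hP1 : ∀ s, ∑ s', P s s' = 1) :
    ∀ n s, hitProb P G n s ≤ 1 := by
  intro n
  induction n with
  | zero => intro s; simp only [hitProb]; split <;> norm_num
  | succ n ih =>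
    intro s; simp only [hitProb]; split
    · norm_num
    · calc ∑ s', P s s' * hitProb P G n s' ≤ ∑ s', P s s' * 1 :=
            Finset.sum_le_sum fun s' _ => mul_le_mul_of_nonneg_left (ih s') (hP0 _ _)
      _ = 1 := by simp [hP1 s]

/-- anytime guarantee of acting greedily w.r.t. a monotone upper bound:
in an SSP MDP with strictly positive costs, if `V̄` satisfies `V* ≤ V̄`, `T V̄ ≤ V̄`
(off the goal), and `V̄(s_g) = 0`, and `π` is the greedy policy with respect to `V̄`,
then the expected cost of `π` never exceeds `V̄` (all its `n`-step expected costs are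
at most `V̄`), and in particular `π` is proper from every state
(here `V̄ : S → ℝ` is everywhere finite). -/
theorem greedy_on_monotone_upper_bound
    {S A : Type*} [Fintype S] [Fintype A] [Nonempty A] [DecidableEq S]
    (T : S → A → S → ℝ) (C : S → A → S → ℝ) (sg : S)
    (hT0 : ∀ s a s', 0 ≤ T s a s') (hT1 : ∀ s a, ∑ s', T s a s' = 1)
    (cmin : ℝ) (hcmin : 0 < cmin) (hC : ∀ s a s', cmin ≤ C s a s')
    -- V* is the optimal value function of the SSP MDP
    (Vstar : S → ℝ) (hVstarg : Vstar sg = 0)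
    (hVstar : ∀ s, s ≠ sg → bellman T C Vstar s = Vstar s)
    -- V̄ is a monotone upper bound with V̄(s_g) = 0
    (Vbar : S → ℝ) (hlb : ∀ s, Vstar s ≤ Vbar s) (hg : Vbar sg = 0)
    (hmono : ∀ s, s ≠ sg → bellman T C Vbar s ≤ Vbar s)
    -- π is greedy with respect to V̄
    (π : S → A)
    (hgreedy : ∀ s a, ∑ s', T s (π s) s' * (C s (π s) s' + Vbar s') ≤
      ∑ s', T s a s' * (C s a s' + Vbar s')) :
    (∀ (n : ℕ) (s : S), expCost T C sg π n s ≤ Vbar s) ∧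
    (∀ s : S, ProperFrom (fun s s' => T s (π s) s') (fun t => t = sg) s) := by
  classical
  -- Vstar is nonnegative
  have hVstar_nonneg : ∀ s, 0 ≤ Vstar s := by
    haveI : Nonempty S := ⟨sg⟩
    by_contra hcon
    push_neg at hcon
    obtain ⟨s1, hs1⟩ := hcon
    obtain ⟨s0, -, hs0⟩ := Finset.exists_mem_eq_inf' (Finset.univ_nonempty (α := S)) Vstar
    set m := Finset.univ.inf' (Finset.univ_nonempty (α := S)) Vstar with hm
    have hmle : ∀ s, m ≤ Vstar s := fun s => Finset.inf'_le _ (Finset.mem_univ s)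
    have hmneg : m < 0 := lt_of_le_of_lt (hmle s1) hs1
    have hs0ne : s0 ≠ sg := by
      intro h
      rw [h, hVstarg] at hs0
      rw [← hs0] at hmneg
      exact lt_irrefl _ hmneg
    have hkey : cmin + m ≤ bellman T C Vstar s0 := by
      apply Finset.le_inf'
      intro a _
      calc cmin + m = ∑ s' : S, T s0 a s' * (cmin + m) := by
            rw [← Finset.sum_mul, hT1]; ring
        _ ≤ ∑ s' : S, T s0 a s' * (C s0 a s' + Vstar s') :=
            Finset.sum_le_sum fun s' _ =>
              mul_le_mul_of_nonneg_left (add_le_add (hC _ _ _) (hmle s')) (hT0 _ _ _)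
    rw [hVstar s0 hs0ne, ← hs0] at hkey
    linarith
  have hVbar_nonneg : ∀ s, 0 ≤ Vbar s := fun s => le_trans (hVstar_nonneg s) (hlb s)
  -- Part 1
  have part1 : ∀ (n : ℕ) (s : S), expCost T C sg π n s ≤ Vbar s := by
    intro n
    induction n with
    | zero => intro s; simpa [expCost] using hVbar_nonneg s
    | succ n ih =>
      intro s
      simp only [expCost]
      split
      · next h => simp [h, hg, hVbar_nonneg]
      · next h =>
        calc ∑ s' : S, T s (π s) s' * (C s (π s) s' + expCost T C sg π n s')
            ≤ ∑ s' : S, T s (π s) s' * (C s (π s) s' + Vbar s') :=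
              Finset.sum_le_sum fun s' _ =>
                mul_le_mul_of_nonneg_left (add_le_add le_rfl (ih s')) (hT0 _ _ _)
          _ ≤ bellman T C Vbar s := Finset.le_inf' _ _ fun a _ => hgreedy s a
          _ ≤ Vbar s := hmono s h
  -- Part 2
  set P : S → S → ℝ := fun s s' => T s (π s) s' with hP
  set G : S → Prop := fun t => t = sg with hG
  have hP0 : ∀ s s', 0 ≤ P s s' := fun s s' => hT0 _ _ _
  have hP1 : ∀ s, ∑ s', P s s' = 1 := fun s => hT1 _ _
  have hnn := hitProb_nonneg P G hP0
  have hle1 := hitProb_le_one P G hP0 hP1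
  have key : ∀ (n : ℕ) (s : S),
      cmin * n * (1 - hitProb P G n s) ≤ expCost T C sg π n s := by
    intro n
    induction n with
    | zero => intro s; simp [expCost]
    | succ n ih =>
      intro s
      by_cases h : s = sg
      · subst h
        have hH : hitProb P G (n + 1) s = 1 := by simp [hitProb, hG]
        simp [expCost, hH]
      · have hrec : hitProb P G (n + 1) s = ∑ s' : S, P s s' * hitProb P G n s' := by
          simp [hitProb, hG, h]
        simp only [expCost, if_neg h]
        have h1 : ∑ s' : S, P s s' * (cmin + cmin * n * (1 - hitProb P G n s'))
            ≤ ∑ s' : S, T s (π s) s' * (C s (π s) s' + expCost T C sg π n s') :=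
          Finset.sum_le_sum fun s' _ =>
            mul_le_mul_of_nonneg_left (add_le_add (hC _ _ _) (ih s')) (hP0 _ _)
        have h2 : ∑ s' : S, P s s' * (cmin + cmin * n * (1 - hitProb P G n s'))
            = (cmin + cmin * n) * (∑ s' : S, P s s')
              - cmin * n * (∑ s' : S, P s s' * hitProb P G n s') := by
          rw [Finset.mul_sum, Finset.mul_sum, ← Finset.sum_sub_distrib]
          exact Finset.sum_congr rfl fun s' _ => by ring
        rw [hP1 s, ← hrec] at h2
        rw [h2] at h1
        have hH0 : 0 ≤ hitProb P G (n + 1) s := hnn _ _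
        push_cast
        nlinarith
  have part2 : ∀ s : S, Tendsto (fun n => hitProb P G n s) atTop (nhds 1) := by
    intro s
    have hdiff : Tendsto (fun n : ℕ => 1 - hitProb P G n s) atTop (nhds 0) := by
      apply squeeze_zero' (Eventually.of_forall fun n => by linarith [hle1 n s])
        (g := fun n : ℕ => Vbar s / (cmin * n))
      · filter_upwards [eventually_ge_atTop 1] with n hn
        have hpos : 0 < cmin * (n : ℝ) := by
          apply mul_pos hcmin
          exact_mod_cast Nat.pos_of_ne_zero (by omega)
        rw [le_div_iff₀ hpos]
        have := (key n s).trans (part1 n s)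
        nlinarith
      · apply Tendsto.div_atTop tendsto_const_nhds
        exact Tendsto.const_mul_atTop hcmin tendsto_natCast_atTop_atTop
    have := hdiff.const_sub 1
    simpa using this
  exact ⟨part1, fun s => part2 s⟩
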